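/- arXiv:2304.03846 — 6 statements merged into one kernel-verified Lean document; each statement's English description precedes it below -/
import Mathlib

section
/- With the notation of the previous context, if β ∈ G(P1), k ∈ ℕ and β+kπ ∈ G(P1), then τ(β+kπ) = τ(β) − kπ. -/
/-- An abstract algebraic function field of one variable, presented through the
discrete valuations `v P` attached to its places, together with its genus. -/
structure FnField where
  F : Type
  [fieldF : Field F]
  Place : Type
  /-- the (normalized discrete) valuation at each place -/
  v : Place → F → ℤ
  v_one : ∀ P, v P 1 = 0
  v_mul : ∀ P (x y : F), x ≠ 0 → y ≠ 0 → v P (x * y) = v P x + v P y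
  v_add : ∀ P (x y : F), x ≠ 0 → y ≠ 0 → x + y ≠ 0 → min (v P x) (v P y) ≤ v P (x + y)
  finite_supp : ∀ x : F, x ≠ 0 → {P | v P x ≠ 0}.Finite
  deg_zero : ∀ x : F, x ≠ 0 → ∀ s : Finset Place, {P | v P x ≠ 0} ⊆ s → ∑ P ∈ s, v P x = 0
  genus : ℕ
  /-- the number of gaps at any place equals the genus (Weierstrass gap theorem) -/
  genus_spec : ∀ P,
    {s : ℕ | ¬ ∃ x : F, x ≠ 0 ∧ v P x = -(s : ℤ) ∧ ∀ Q, Q ≠ P → 0 ≤ v Q x}.ncard = genus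

attribute [instance] FnField.fieldF

namespace FnField

variable (C : FnField)

/-- `(s₁, s₂) ∈ H(P₁, P₂)`: there is a function with pole divisor `s₁P₁ + s₂P₂`. -/
def Hpair (P1 P2 : C.Place) (s : ℕ × ℕ) : Prop :=
  ∃ x : C.F, x ≠ 0 ∧ C.v P1 x = -(s.1 : ℤ) ∧ C.v P2 x = -(s.2 : ℤ) ∧
    ∀ Q, Q ≠ P1 → Q ≠ P2 → 0 ≤ C.v Q x

/-- `s ∈ H(P)`: there is a function with pole divisor `sP`. -/
def Hone (P : C.Place) (s : ℕ) : Prop :=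
  ∃ x : C.F, x ≠ 0 ∧ C.v P x = -(s : ℤ) ∧ ∀ Q, Q ≠ P → 0 ≤ C.v Q x

/-- `s` is a gap at `P`. -/
def Gap (P : C.Place) (s : ℕ) : Prop := ¬ C.Hone P s

/-- `τ(β) = min {γ : (β, γ) ∈ H(P₁, P₂)}`. -/
noncomputable def tau (P1 P2 : C.Place) (β : ℕ) : ℕ := sInf {γ : ℕ | C.Hpair P1 P2 (β, γ)}

/-- `k (P₁ - P₂)` is a principal divisor. -/
def IsPrincipalDiff (P1 P2 : C.Place) (k : ℤ) : Prop :=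
  ∃ x : C.F, x ≠ 0 ∧ C.v P1 x = k ∧ C.v P2 x = -k ∧ ∀ Q, Q ≠ P1 → Q ≠ P2 → C.v Q x = 0

/-- the period `π` of `H(P₁, P₂)`: the least `k > 0` with `k(P₁ - P₂)` principal. -/
noncomputable def period (P1 P2 : C.Place) : ℕ := sInf {k : ℕ | 0 < k ∧ C.IsPrincipalDiff P1 P2 (k : ℤ)}

/-- the minimal generating set `Γ(P₁,P₂) = {(β, τ(β)) : β ∈ G(P₁)}`. -/
def GammaSet (P1 P2 : C.Place) : Set (ℕ × ℕ) :=
  {p | C.Gap P1 p.1 ∧ p.2 = C.tau P1 P2 p.1}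

/-- `Γ_{k₁,k₂} = Γ(P₁,P₂) ∩ ((k₁π, (k₁+1)π] × (k₂π, (k₂+1)π])`. -/
def GammaPart (P1 P2 : C.Place) (k1 k2 : ℕ) : Set (ℕ × ℕ) :=
  {p | p ∈ C.GammaSet P1 P2 ∧
    k1 * C.period P1 P2 < p.1 ∧ p.1 ≤ (k1 + 1) * C.period P1 P2 ∧
    k2 * C.period P1 P2 < p.2 ∧ p.2 ≤ (k2 + 1) * C.period P1 P2}

/-- `(s₁,s₂)` is a pure gap at `P₁,P₂`, i.e. `ℓ(s₁P₁+s₂P₂) = ℓ((s₁-1)P₁+(s₂-1)P₂)`,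
formulated as: no function in `L(s₁P₁+s₂P₂)` attains the exact pole order `s₁` at `P₁`,
nor the exact pole order `s₂` at `P₂`. -/
def PureGap (P1 P2 : C.Place) (s : ℕ × ℕ) : Prop :=
  (¬ ∃ x : C.F, x ≠ 0 ∧ C.v P1 x = -(s.1 : ℤ) ∧ -(s.2 : ℤ) ≤ C.v P2 x ∧
      ∀ Q, Q ≠ P1 → Q ≠ P2 → 0 ≤ C.v Q x) ∧
  (¬ ∃ x : C.F, x ≠ 0 ∧ C.v P2 x = -(s.2 : ℤ) ∧ -(s.1 : ℤ) ≤ C.v P1 x ∧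
      ∀ Q, Q ≠ P1 → Q ≠ P2 → 0 ≤ C.v Q x)

/-- the pure gap set `G₀(P₁,P₂)`. -/
def PureGapSet (P1 P2 : C.Place) : Set (ℕ × ℕ) := {s | C.PureGap P1 P2 s}

/-- `G_{k₁,k₂} = G₀(P₁,P₂) ∩ ((k₁π, (k₁+1)π] × (k₂π, (k₂+1)π])`. -/
def PureGapPart (P1 P2 : C.Place) (k1 k2 : ℕ) : Set (ℕ × ℕ) :=
  {p | p ∈ C.PureGapSet P1 P2 ∧
    k1 * C.period P1 P2 < p.1 ∧ p.1 ≤ (k1 + 1) * C.period P1 P2 ∧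
    k2 * C.period P1 P2 < p.2 ∧ p.2 ≤ (k2 + 1) * C.period P1 P2}

end FnField

/-- componentwise minimum (greatest lower bound) on `ℕ × ℕ`. -/
def glb (u v : ℕ × ℕ) : ℕ × ℕ := (min u.1 v.1, min u.2 v.2)

/-- `u ⋠ v` for the componentwise partial order on `ℕ × ℕ`. -/
def notPrec (u v : ℕ × ℕ) : Prop := v.1 < u.1 ∨ v.2 < u.2

namespace FnField

variable (C : FnField)

/-- `G¹_{k,0} = {glb(u,v) : u ∈ Γ_{k,k₂}, v ∈ Γ_{k₁,0}, k < k₁, 0 < k₂}`. -/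
def G1part (P1 P2 : C.Place) (k : ℕ) : Set (ℕ × ℕ) :=
  {p | ∃ u v k1 k2, u ∈ C.GammaPart P1 P2 k k2 ∧ v ∈ C.GammaPart P1 P2 k1 0 ∧
    k < k1 ∧ 0 < k2 ∧ p = glb u v}

/-- `G²_{k,0} = {glb(u,v) : u, v ∈ Γ_{k,0}, u ⋠ v, v ⋠ u}`. -/
def G2part (P1 P2 : C.Place) (k : ℕ) : Set (ℕ × ℕ) :=
  {p | ∃ u v, u ∈ C.GammaPart P1 P2 k 0 ∧ v ∈ C.GammaPart P1 P2 k 0 ∧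
    notPrec u v ∧ notPrec v u ∧ p = glb u v}

/-- `G³_{k,0} = {glb(u,v) : u ∈ Γ_{k,0}, v ∈ Γ_{k₁,0}, u ⋠ v, k < k₁}`. -/
def G3part (P1 P2 : C.Place) (k : ℕ) : Set (ℕ × ℕ) :=
  {p | ∃ u v k1, u ∈ C.GammaPart P1 P2 k 0 ∧ v ∈ C.GammaPart P1 P2 k1 0 ∧
    notPrec u v ∧ k < k1 ∧ p = glb u v}

/-- `G⁴_{k,0} = {glb(u,v) : u ∈ Γ_{k,k₂}, v ∈ Γ_{k,0}, v ⋠ u, 0 < k₂}`. -/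
def G4part (P1 P2 : C.Place) (k : ℕ) : Set (ℕ × ℕ) :=
  {p | ∃ u v k2, u ∈ C.GammaPart P1 P2 k k2 ∧ v ∈ C.GammaPart P1 P2 k 0 ∧
    notPrec v u ∧ 0 < k2 ∧ p = glb u v}

end FnField

namespace FnField

lemma v_pow (C : FnField) (P : C.Place) (t : C.F) (ht : t ≠ 0) (n : ℕ) :
    C.v P (t ^ n) = (n : ℤ) * C.v P t := by
  induction n with
  | zero => simpa using C.v_one P
  | succ n ih =>
    rw [pow_succ, C.v_mul P _ t (pow_ne_zero n ht) ht, ih]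
    push_cast; ring

lemma v_inv (C : FnField) (P : C.Place) (t : C.F) (ht : t ≠ 0) :
    C.v P t⁻¹ = - C.v P t := by
  have h := C.v_mul P t t⁻¹ ht (inv_ne_zero ht)
  rw [mul_inv_cancel₀ ht, C.v_one] at h
  omega

end FnField

/-- If `β ∈ G(P₁)`, `k ≥ 1` and `β + kπ ∈ G(P₁)`, then
`τ(β + kπ) = τ(β) - kπ`. -/
theorem tau_shift (C : FnField) (P1 P2 : C.Place) (hP : P1 ≠ P2)
    (β k : ℕ) (hβ : C.Gap P1 β) (hk : 0 < k)
    (hβk : C.Gap P1 (β + k * C.period P1 P2)) :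
    C.tau P1 P2 (β + k * C.period P1 P2) = C.tau P1 P2 β - k * C.period P1 P2 := by
  by_cases hπ0 : C.period P1 P2 = 0
  · simp [hπ0]
  · have hne : {m : ℕ | 0 < m ∧ C.IsPrincipalDiff P1 P2 (m : ℤ)}.Nonempty := by
      by_contra h
      rw [Set.not_nonempty_iff_eq_empty] at h
      exact hπ0 (by rw [FnField.period, h, Nat.sInf_empty])
    have hmem : 0 < C.period P1 P2 ∧ C.IsPrincipalDiff P1 P2 ((C.period P1 P2 : ℕ) : ℤ) :=
      Nat.sInf_mem hne
    obtain ⟨t, ht0, ht1, ht2, htQ⟩ := hmem.2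
    set π := C.period P1 P2 with hπdef
    have htk0 : t ^ k ≠ 0 := pow_ne_zero k ht0
    have htki0 : (t ^ k)⁻¹ ≠ 0 := inv_ne_zero htk0
    have hv1k : C.v P1 (t ^ k) = (k : ℤ) * π := by rw [C.v_pow P1 t ht0 k, ht1]
    have hv2k : C.v P2 (t ^ k) = -((k : ℤ) * π) := by
      rw [C.v_pow P2 t ht0 k, ht2]; ring
    have hvQk : ∀ Q, Q ≠ P1 → Q ≠ P2 → C.v Q (t ^ k) = 0 := by
      intro Q h1 h2; rw [C.v_pow Q t ht0 k, htQ Q h1 h2, mul_zero]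
    have hv1ki : C.v P1 (t ^ k)⁻¹ = -((k : ℤ) * π) := by rw [C.v_inv P1 _ htk0, hv1k]
    have hv2ki : C.v P2 (t ^ k)⁻¹ = (k : ℤ) * π := by rw [C.v_inv P2 _ htk0, hv2k]; ring
    have hvQki : ∀ Q, Q ≠ P1 → Q ≠ P2 → C.v Q (t ^ k)⁻¹ = 0 := by
      intro Q h1 h2; rw [C.v_inv Q _ htk0, hvQk Q h1 h2]; ring
    -- shifting up
    have hup : ∀ γ : ℕ, C.Hpair P1 P2 (β + k * π, γ) → C.Hpair P1 P2 (β, γ + k * π) := by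
      rintro γ ⟨x, hx0, hx1, hx2, hxQ⟩
      refine ⟨x * t ^ k, mul_ne_zero hx0 htk0, ?_, ?_, ?_⟩
      · rw [C.v_mul P1 x _ hx0 htk0, hx1, hv1k]; push_cast; ring
      · rw [C.v_mul P2 x _ hx0 htk0, hx2, hv2k]; push_cast; ring
      · intro Q h1 h2
        rw [C.v_mul Q x _ hx0 htk0, hvQk Q h1 h2, add_zero]
        exact hxQ Q h1 h2
    -- every γ with (β, γ) ∈ H exceeds kπ
    have hgt : ∀ γ : ℕ, C.Hpair P1 P2 (β, γ) → k * π < γ := by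
      rintro γ ⟨x, hx0, hx1, hx2, hxQ⟩
      by_contra h
      push_neg at h
      apply hβk
      refine ⟨x * (t ^ k)⁻¹, mul_ne_zero hx0 htki0, ?_, ?_⟩
      · rw [C.v_mul P1 x _ hx0 htki0, hx1, hv1ki]; push_cast; ring
      · intro Q hQ
        by_cases hQ2 : Q = P2
        · rw [hQ2, C.v_mul P2 x _ hx0 htki0, hx2, hv2ki]
          have : (γ : ℤ) ≤ (k : ℤ) * π := by exact_mod_cast h
          omega
        · rw [C.v_mul Q x _ hx0 htki0, hvQki Q hQ hQ2, add_zero]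
          exact hxQ Q hQ hQ2
    -- shifting down
    have hdown : ∀ γ : ℕ, C.Hpair P1 P2 (β, γ) → C.Hpair P1 P2 (β + k * π, γ - k * π) := by
      intro γ hx
      have hγ := hgt γ hx
      obtain ⟨x, hx0, hx1, hx2, hxQ⟩ := hx
      refine ⟨x * (t ^ k)⁻¹, mul_ne_zero hx0 htki0, ?_, ?_, ?_⟩
      · rw [C.v_mul P1 x _ hx0 htki0, hx1, hv1ki]; push_cast; ring
      · rw [C.v_mul P2 x _ hx0 htki0, hx2, hv2ki]
        have : ((γ - k * π : ℕ) : ℤ) = (γ : ℤ) - (k : ℤ) * π := by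
          push_cast [Nat.cast_sub hγ.le]; ring
        rw [this]; ring
      · intro Q h1 h2
        rw [C.v_mul Q x _ hx0 htki0, hvQki Q h1 h2, add_zero]
        exact hxQ Q h1 h2
    -- now compare the infima
    rw [FnField.tau, FnField.tau]
    set S : Set ℕ := {γ : ℕ | C.Hpair P1 P2 (β, γ)} with hS
    set T : Set ℕ := {γ : ℕ | C.Hpair P1 P2 (β + k * π, γ)} with hT
    by_cases hSne : S.Nonempty
    · have hmS : sInf S ∈ S := Nat.sInf_mem hSne
      have hmgt : k * π < sInf S := hgt _ hmS
      have hTmem : sInf S - k * π ∈ T := hdown _ hmS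
      have hTne : T.Nonempty := ⟨_, hTmem⟩
      have h1 : sInf T ≤ sInf S - k * π := Nat.sInf_le hTmem
      have hmT : sInf T ∈ T := Nat.sInf_mem hTne
      have h2 : sInf S ≤ sInf T + k * π := Nat.sInf_le (hup _ hmT)
      omega
    · have hTe : T = ∅ := by
        rw [Set.eq_empty_iff_forall_notMem]
        intro γ hγ
        exact hSne ⟨γ + k * π, hup γ hγ⟩
      rw [Set.not_nonempty_iff_eq_empty] at hSne
      rw [hTe, hSne, Nat.sInf_empty]
      omega
end

section
/- Let Γ(P1,P2) = {(β, τ(β)) : β ∈ G(P1)} be the minimal generating set, and for k1,k2 ∈ ℕ₀ set Γ_{k1,k2} = Γ(P1,P2) ∩ ((k1π,(k1+1)π] × (k2π,(k2+1)π]). Then for all i,j ≥ 0, Γ_{i,j} = Γ_{i+j,0} + (−jπ, jπ). -/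
namespace FnField

variable {C : FnField} {P1 P2 : C.Place}

lemma v_inv_s2 (P : C.Place) {x : C.F} (hx : x ≠ 0) : C.v P x⁻¹ = - C.v P x := by
  have h := C.v_mul P x x⁻¹ hx (inv_ne_zero hx)
  rw [mul_inv_cancel₀ hx, C.v_one] at h
  linarith

lemma hpair_up {n : ℕ} {z : C.F} (hz : z ≠ 0)
    (hz1 : C.v P1 z = (n : ℤ)) (hz2 : C.v P2 z = -(n : ℤ))
    (hzQ : ∀ Q, Q ≠ P1 → Q ≠ P2 → C.v Q z = 0)
    {s1 s2 : ℕ} (h : C.Hpair P1 P2 (s1, s2 + n)) :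
    C.Hpair P1 P2 (s1 + n, s2) := by
  obtain ⟨x, hx, h1, h2, hQ⟩ := h
  have hzi : z⁻¹ ≠ 0 := inv_ne_zero hz
  refine ⟨x * z⁻¹, mul_ne_zero hx hzi, ?_, ?_, ?_⟩
  · rw [C.v_mul _ _ _ hx hzi, v_inv_s2 _ hz, hz1]
    simp only at h1 ⊢
    push_cast
    omega
  · rw [C.v_mul _ _ _ hx hzi, v_inv_s2 _ hz, hz2]
    simp only at h2 ⊢
    push_cast
    omega
  · intro Q hQ1 hQ2
    rw [C.v_mul _ _ _ hx hzi, v_inv_s2 _ hz, hzQ Q hQ1 hQ2]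
    simpa using hQ Q hQ1 hQ2

lemma hpair_down {n : ℕ} {z : C.F} (hz : z ≠ 0)
    (hz1 : C.v P1 z = (n : ℤ)) (hz2 : C.v P2 z = -(n : ℤ))
    (hzQ : ∀ Q, Q ≠ P1 → Q ≠ P2 → C.v Q z = 0)
    {s1 s2 : ℕ} (h : C.Hpair P1 P2 (s1 + n, s2)) :
    C.Hpair P1 P2 (s1, s2 + n) := by
  obtain ⟨x, hx, h1, h2, hQ⟩ := h
  refine ⟨x * z, mul_ne_zero hx hz, ?_, ?_, ?_⟩
  · rw [C.v_mul _ _ _ hx hz, hz1]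
    simp only at h1 ⊢
    push_cast
    omega
  · rw [C.v_mul _ _ _ hx hz, hz2]
    simp only at h2 ⊢
    push_cast
    omega
  · intro Q hQ1 hQ2
    rw [C.v_mul _ _ _ hx hz, hzQ Q hQ1 hQ2]
    simpa using hQ Q hQ1 hQ2

lemma hone_add (hP : P1 ≠ P2) {n : ℕ} {z : C.F} (hz : z ≠ 0)
    (hz1 : C.v P1 z = (n : ℤ)) (hz2 : C.v P2 z = -(n : ℤ))
    (hzQ : ∀ Q, Q ≠ P1 → Q ≠ P2 → C.v Q z = 0)
    {β : ℕ} (h : C.Hone P1 β) : C.Hone P1 (β + n) := by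
  obtain ⟨x, hx, h1, hQ⟩ := h
  have hzi : z⁻¹ ≠ 0 := inv_ne_zero hz
  refine ⟨x * z⁻¹, mul_ne_zero hx hzi, ?_, ?_⟩
  · rw [C.v_mul _ _ _ hx hzi, v_inv_s2 _ hz, hz1, h1]
    push_cast
    ring
  · intro Q hQ1
    rw [C.v_mul _ _ _ hx hzi, v_inv_s2 _ hz]
    by_cases hQ2 : Q = P2
    · rw [hQ2, hz2]
      have := hQ P2 hP.symm
      omega
    · rw [hzQ Q hQ1 hQ2]
      simpa using hQ Q hQ1

/-- the set `{γ | (β,γ) ∈ H(P1,P2)}` is nonempty whenever `τ β > 0`. -/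
lemma tau_mem {β : ℕ} (h : 0 < C.tau P1 P2 β) :
    C.Hpair P1 P2 (β, C.tau P1 P2 β) := by
  have hne : {γ : ℕ | C.Hpair P1 P2 (β, γ)}.Nonempty := by
    by_contra hc
    rw [Set.not_nonempty_iff_eq_empty] at hc
    have : C.tau P1 P2 β = 0 := by
      unfold tau
      rw [hc, Nat.sInf_empty]
    omega
  exact Nat.sInf_mem hne

lemma tau_le {β γ : ℕ} (h : C.Hpair P1 P2 (β, γ)) : C.tau P1 P2 β ≤ γ :=
  Nat.sInf_le h

lemma gap_add (hP : P1 ≠ P2) {n : ℕ} {z : C.F} (hz : z ≠ 0)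
    (hz1 : C.v P1 z = (n : ℤ)) (hz2 : C.v P2 z = -(n : ℤ))
    (hzQ : ∀ Q, Q ≠ P1 → Q ≠ P2 → C.v Q z = 0)
    {β : ℕ} (hg : C.Gap P1 β) (ht : n < C.tau P1 P2 β) : C.Gap P1 (β + n) := by
  intro hone
  obtain ⟨x, hx, h1, hQ⟩ := hone
  have hv2 : 0 ≤ C.v P2 x := hQ P2 hP.symm
  have hy : x * z ≠ 0 := mul_ne_zero hx hz
  have hy1 : C.v P1 (x * z) = -(β : ℤ) := by
    rw [C.v_mul _ _ _ hx hz, hz1, h1]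
    push_cast
    ring
  have hy2 : C.v P2 (x * z) = C.v P2 x - (n : ℤ) := by
    rw [C.v_mul _ _ _ hx hz, hz2]
    ring
  have hyQ : ∀ Q, Q ≠ P1 → Q ≠ P2 → 0 ≤ C.v Q (x * z) := by
    intro Q hQ1 hQ2
    rw [C.v_mul _ _ _ hx hz, hzQ Q hQ1 hQ2]
    simpa using hQ Q hQ1
  by_cases hcase : C.v P2 x ≤ (n : ℤ)
  · -- exact pole data at P2 of order ≤ n
    set s2 : ℕ := ((n : ℤ) - C.v P2 x).toNat with hs2
    have hs2' : ((s2 : ℤ)) = (n : ℤ) - C.v P2 x := by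
      rw [hs2]
      omega
    have hpair : C.Hpair P1 P2 (β, s2) := by
      refine ⟨x * z, hy, hy1, ?_, hyQ⟩
      simp only
      omega
    have h1 : C.tau P1 P2 β ≤ s2 := tau_le hpair
    have h2 : s2 ≤ n := by omega
    omega
  · -- no pole at P2 at all : contradicts β being a gap
    apply hg
    refine ⟨x * z, hy, hy1, ?_⟩
    intro Q hQ1
    by_cases hQ2 : Q = P2
    · rw [hQ2]
      have := hQ P2 hP.symm
      omega
    · exact hyQ Q hQ1 hQ2

lemma tau_add_eq {n : ℕ} {z : C.F} (hz : z ≠ 0)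
    (hz1 : C.v P1 z = (n : ℤ)) (hz2 : C.v P2 z = -(n : ℤ))
    (hzQ : ∀ Q, Q ≠ P1 → Q ≠ P2 → C.v Q z = 0)
    {β : ℕ} (ht : n < C.tau P1 P2 β) :
    C.tau P1 P2 (β + n) + n = C.tau P1 P2 β := by
  have hmem : C.Hpair P1 P2 (β, C.tau P1 P2 β) := tau_mem (by omega)
  have hrw : C.tau P1 P2 β = (C.tau P1 P2 β - n) + n := by omega
  rw [hrw] at hmem
  have hup : C.Hpair P1 P2 (β + n, C.tau P1 P2 β - n) := hpair_up hz hz1 hz2 hzQ hmem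
  have hle : C.tau P1 P2 (β + n) ≤ C.tau P1 P2 β - n := tau_le hup
  have hne : {γ : ℕ | C.Hpair P1 P2 (β + n, γ)}.Nonempty := ⟨_, hup⟩
  have hmem' : C.Hpair P1 P2 (β + n, C.tau P1 P2 (β + n)) := Nat.sInf_mem hne
  have hdown : C.Hpair P1 P2 (β, C.tau P1 P2 (β + n) + n) := hpair_down hz hz1 hz2 hzQ hmem'
  have hge : C.tau P1 P2 β ≤ C.tau P1 P2 (β + n) + n := tau_le hdown
  omega

lemma tau_sub_eq (hP : P1 ≠ P2) {n : ℕ} {z : C.F} (hz : z ≠ 0)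
    (hz1 : C.v P1 z = (n : ℤ)) (hz2 : C.v P2 z = -(n : ℤ))
    (hzQ : ∀ Q, Q ≠ P1 → Q ≠ P2 → C.v Q z = 0)
    {β : ℕ} (hg : C.Gap P1 (β + n)) (ht : 0 < C.tau P1 P2 (β + n)) :
    C.tau P1 P2 β = C.tau P1 P2 (β + n) + n := by
  have hmem' : C.Hpair P1 P2 (β + n, C.tau P1 P2 (β + n)) := tau_mem ht
  have hdown : C.Hpair P1 P2 (β, C.tau P1 P2 (β + n) + n) := hpair_down hz hz1 hz2 hzQ hmem'
  have hle : C.tau P1 P2 β ≤ C.tau P1 P2 (β + n) + n := tau_le hdown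
  have hpos : 0 < C.tau P1 P2 β := by
    rcases Nat.eq_zero_or_pos (C.tau P1 P2 β) with h0 | h0
    · exfalso
      -- τ β = 0 means (β,0) ∈ H, but then we can check cases below; handle via hmem
      have hmem : C.Hpair P1 P2 (β, 0) := by
        have := tau_mem (C := C) (P1 := P1) (P2 := P2) (β := β) -- unusable if τ = 0
        -- instead: 0 = sInf of a nonempty set containing τ(β+n)+n
        have hne : {γ : ℕ | C.Hpair P1 P2 (β, γ)}.Nonempty := ⟨_, hdown⟩
        have := Nat.sInf_mem hne
        unfold tau at h0
        rw [h0] at this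
        exact this
      obtain ⟨x, hx, h1, h2, hQ⟩ := hmem
      apply hg
      -- x * z⁻¹ has pole β + n at P1, no poles elsewhere
      have hzi : z⁻¹ ≠ 0 := inv_ne_zero hz
      refine ⟨x * z⁻¹, mul_ne_zero hx hzi, ?_, ?_⟩
      · rw [C.v_mul _ _ _ hx hzi, v_inv_s2 _ hz, hz1]
        simp only at h1
        rw [h1]
        push_cast
        ring
      · intro Q hQ1
        rw [C.v_mul _ _ _ hx hzi, v_inv_s2 _ hz]
        by_cases hQ2 : Q = P2
        · rw [hQ2, hz2]
          simp only at h2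
          omega
        · rw [hzQ Q hQ1 hQ2]
          simpa using hQ Q hQ1 hQ2
    · exact h0
  have hmem : C.Hpair P1 P2 (β, C.tau P1 P2 β) := tau_mem hpos
  by_cases hcase : n ≤ C.tau P1 P2 β
  · have hrw : C.tau P1 P2 β = (C.tau P1 P2 β - n) + n := by omega
    rw [hrw] at hmem
    have hup : C.Hpair P1 P2 (β + n, C.tau P1 P2 β - n) := hpair_up hz hz1 hz2 hzQ hmem
    have := tau_le hup
    omega
  · exfalso
    -- τ β < n : then x z⁻¹ shows β + n is not a gap
    obtain ⟨x, hx, h1, h2, hQ⟩ := hmem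
    apply hg
    have hzi : z⁻¹ ≠ 0 := inv_ne_zero hz
    refine ⟨x * z⁻¹, mul_ne_zero hx hzi, ?_, ?_⟩
    · rw [C.v_mul _ _ _ hx hzi, v_inv_s2 _ hz, hz1]
      simp only at h1
      rw [h1]
      push_cast
      ring
    · intro Q hQ1
      rw [C.v_mul _ _ _ hx hzi, v_inv_s2 _ hz]
      by_cases hQ2 : Q = P2
      · rw [hQ2, hz2]
        simp only at h2
        omega
      · rw [hzQ Q hQ1 hQ2]
        simpa using hQ Q hQ1 hQ2

/-- forward iteration: climbing `j` periods. -/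
lemma gamma_forward (hP : P1 ≠ P2) {n : ℕ} {z : C.F} (hz : z ≠ 0)
    (hz1 : C.v P1 z = (n : ℤ)) (hz2 : C.v P2 z = -(n : ℤ))
    (hzQ : ∀ Q, Q ≠ P1 → Q ≠ P2 → C.v Q z = 0) :
    ∀ (j β : ℕ), C.Gap P1 β → j * n < C.tau P1 P2 β →
      C.Gap P1 (β + j * n) ∧ C.tau P1 P2 (β + j * n) + j * n = C.tau P1 P2 β := by
  intro j
  induction j with
  | zero => intro β hg ht; simpa using hg
  | succ k ih =>
    intro β hg ht
    have hn : n < C.tau P1 P2 β := by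
      have e2 : (k + 1) * n = k * n + n := by ring
      omega
    have hg' : C.Gap P1 (β + n) := gap_add hP hz hz1 hz2 hzQ hg hn
    have heq : C.tau P1 P2 (β + n) + n = C.tau P1 P2 β := tau_add_eq hz hz1 hz2 hzQ hn
    have ht' : k * n < C.tau P1 P2 (β + n) := by
      have : (k + 1) * n = k * n + n := by ring
      omega
    obtain ⟨hga, hta⟩ := ih (β + n) hg' ht'
    constructor
    · have : β + (k + 1) * n = (β + n) + k * n := by ring
      rw [this]
      exact hga
    · have e1 : β + (k + 1) * n = (β + n) + k * n := by ring
      have e2 : (k + 1) * n = k * n + n := by ring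
      rw [e1, e2]
      omega

/-- backward iteration: descending `j` periods. -/
lemma gamma_backward (hP : P1 ≠ P2) {n : ℕ} {z : C.F} (hz : z ≠ 0)
    (hz1 : C.v P1 z = (n : ℤ)) (hz2 : C.v P2 z = -(n : ℤ))
    (hzQ : ∀ Q, Q ≠ P1 → Q ≠ P2 → C.v Q z = 0) :
    ∀ (j β : ℕ), C.Gap P1 (β + j * n) → 0 < C.tau P1 P2 (β + j * n) →
      C.Gap P1 β ∧ C.tau P1 P2 β = C.tau P1 P2 (β + j * n) + j * n := by
  intro j
  induction j with
  | zero => intro β hg ht; simpa using hg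
  | succ k ih =>
    intro β hg ht
    have e1 : β + (k + 1) * n = (β + n) + k * n := by ring
    rw [e1] at hg ht
    obtain ⟨hg', ht'⟩ := ih (β + n) hg ht
    have hpos : 0 < C.tau P1 P2 (β + n) := by omega
    have hgb : C.Gap P1 β := by
      intro hone
      exact hg' (hone_add hP hz hz1 hz2 hzQ hone)
    have heq : C.tau P1 P2 β = C.tau P1 P2 (β + n) + n := tau_sub_eq hP hz hz1 hz2 hzQ hg' hpos
    refine ⟨hgb, ?_⟩
    rw [e1]
    have e2 : (k + 1) * n = k * n + n := by ring
    omega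

end FnField

/-- `Γ_{i,j} = Γ_{i+j,0} + (-jπ, jπ)`. -/
theorem gammaPart_shift (C : FnField) (P1 P2 : C.Place) (hP : P1 ≠ P2) (i j : ℕ) :
    C.GammaPart P1 P2 i j =
      (fun p : ℕ × ℕ => (p.1 - j * C.period P1 P2, p.2 + j * C.period P1 P2)) ''
        C.GammaPart P1 P2 (i + j) 0 := by
  rcases Nat.eq_zero_or_pos (C.period P1 P2) with hpi0 | hpipos
  · -- degenerate case: the period set is empty, both sides are empty
    ext ⟨a, b⟩
    simp only [FnField.GammaPart, Set.mem_setOf_eq, Set.mem_image, hpi0, Nat.mul_zero]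
    constructor
    · rintro ⟨-, h1, h2, -⟩; omega
    · rintro ⟨⟨c, d⟩, ⟨-, h1, h2, -⟩, -⟩; omega
  · -- the period is attained by an actual principal divisor
    have hne : {k : ℕ | 0 < k ∧ C.IsPrincipalDiff P1 P2 (k : ℤ)}.Nonempty :=
      Nat.nonempty_of_pos_sInf hpipos
    have hmem : C.period P1 P2 ∈ {k : ℕ | 0 < k ∧ C.IsPrincipalDiff P1 P2 (k : ℤ)} :=
      Nat.sInf_mem hne
    obtain ⟨-, z, hz, hz1, hz2, hzQ⟩ := hmem
    have hzQ' : ∀ Q, Q ≠ P1 → Q ≠ P2 → C.v Q z = 0 := hzQ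
    have e0 : (i + j) * C.period P1 P2 = i * C.period P1 P2 + j * C.period P1 P2 := by ring
    have e1 : (i + j + 1) * C.period P1 P2
        = (i + 1) * C.period P1 P2 + j * C.period P1 P2 := by ring
    have e2 : (i + 1) * C.period P1 P2 = i * C.period P1 P2 + C.period P1 P2 := by ring
    have e3 : (j + 1) * C.period P1 P2 = j * C.period P1 P2 + C.period P1 P2 := by ring
    have e4 : (0 + 1) * C.period P1 P2 = C.period P1 P2 := by ring
    have e5 : 0 * C.period P1 P2 = 0 := by ring
    ext ⟨a, b⟩
    simp only [FnField.GammaPart, FnField.GammaSet, Set.mem_setOf_eq, Set.mem_image]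
    constructor
    · rintro ⟨⟨hg, hb⟩, hb1, hb2, hb3, hb4⟩
      subst hb
      obtain ⟨hg', ht'⟩ :=
        FnField.gamma_forward hP hz hz1 hz2 hzQ' j a hg hb3
      refine ⟨(a + j * C.period P1 P2,
               C.tau P1 P2 (a + j * C.period P1 P2)), ⟨⟨hg', rfl⟩, ?_, ?_, ?_, ?_⟩, ?_⟩
      · show (i + j) * C.period P1 P2 < a + j * C.period P1 P2
        omega
      · show a + j * C.period P1 P2 ≤ (i + j + 1) * C.period P1 P2
        omega
      · show 0 * C.period P1 P2 < C.tau P1 P2 (a + j * C.period P1 P2)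
        omega
      · show C.tau P1 P2 (a + j * C.period P1 P2) ≤ (0 + 1) * C.period P1 P2
        omega
      · show ((a + j * C.period P1 P2) - j * C.period P1 P2,
              C.tau P1 P2 (a + j * C.period P1 P2) + j * C.period P1 P2)
            = (a, C.tau P1 P2 a)
        have ha : (a + j * C.period P1 P2) - j * C.period P1 P2 = a := by omega
        rw [ha]
        have hb : C.tau P1 P2 (a + j * C.period P1 P2) + j * C.period P1 P2
            = C.tau P1 P2 a := ht'
        rw [hb]
    · rintro ⟨⟨c, d⟩, ⟨⟨hg, hd⟩, hb1, hb2, hb3, hb4⟩, heq⟩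
      simp only at hg hd hb1 hb2 hb3 hb4 heq
      subst hd
      simp only [Prod.mk.injEq] at heq
      obtain ⟨heq1, heq2⟩ := heq
      have hjle : j * C.period P1 P2 ≤ c := by omega
      have hc : c = (c - j * C.period P1 P2) + j * C.period P1 P2 := by omega
      rw [hc] at hg hb1 hb2 hb3 hb4 heq1 heq2
      have htpos : 0 < C.tau P1 P2 ((c - j * C.period P1 P2) + j * C.period P1 P2) := by
        omega
      obtain ⟨hg0, ht0⟩ :=
        FnField.gamma_backward hP hz hz1 hz2 hzQ' j (c - j * C.period P1 P2) hg htpos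
      have ha : a = c - j * C.period P1 P2 := by omega
      subst ha
      have hbval : b = C.tau P1 P2 (c - j * C.period P1 P2) := by omega
      subst hbval
      exact ⟨⟨hg0, rfl⟩, by omega, by omega, by omega, by omega⟩
end

section
/- Let m ≥ 2, r ≥ 2 with gcd(m, λr) = 1 and p ∤ m, and let K(𝒳) be the Kummer extension y^m = f(x)^λ with f separable of degree r. If P1, P2 are totally ramified places of K(𝒳)/K(x) different from P_∞, then the period of H(P1,P2) is m. -/
/-- A Kummer extension `K(𝒳)`, `𝒳 : yᵐ = f(x)^λ` over an algebraically closed field `K`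
of characteristic `p ∤ m`, with `f` separable of degree `r ≥ 2` and `gcd(m, λr) = 1`,
presented through the standard facts used in the paper about two totally ramified
places `P₁, P₂` of `K(𝒳)/K(x)` different from the place at infinity. -/
structure KummerData (m r : ℕ) extends FnField where
  lam : ℕ
  lam_pos : 0 < lam
  hm : 2 ≤ m
  hr : 2 ≤ r
  coprime : Nat.Coprime m (lam * r)
  P1 : Place
  P2 : Place
  P1_ne_P2 : P1 ≠ P2
  /-- the principal divisor `((x - α₁)/(x - α₂)) = m(P₁ - P₂)` -/
  princ : FnField.IsPrincipalDiff toFnField P1 P2 (m : ℤ)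
  /-- `m - ⌊m/r⌋` is the smallest nonzero element of `H(P₂)` -/
  H2_min_mem : FnField.Hone toFnField P2 (m - m / r)
  H2_min : ∀ s : ℕ, 0 < s → FnField.Hone toFnField P2 s → m - m / r ≤ s
  /-- the minimal generating set `Γ(P₁, P₂)` (Yang–Hu) -/
  gamma_desc : FnField.GammaSet toFnField P1 P2 =
    {p : ℕ × ℕ | ∃ j k1 k2 : ℕ, 1 ≤ j ∧ j ≤ m - 1 - m / r ∧
      k1 + k2 = r - 2 - (r * j) / m ∧ p = (m * k1 + j, m * k2 + j)}
  /-- the genus is `(1/2)(m-1)(r-1)` -/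
  genus_eq : 2 * genus = (m - 1) * (r - 1)

namespace FnField

variable (C : FnField)

lemma v_div (P : C.Place) (x y : C.F) (hx : x ≠ 0) (hy : y ≠ 0) :
    C.v P (x * y⁻¹) = C.v P x - C.v P y := by
  have hyi : (y⁻¹ : C.F) ≠ 0 := inv_ne_zero hy
  have h1 := C.v_mul P x y⁻¹ hx hyi
  have h2 := C.v_mul P y y⁻¹ hy hyi
  rw [mul_inv_cancel₀ hy, C.v_one] at h2
  omega

lemma princ_sub (P1 P2 : C.Place) (k l : ℤ)
    (hk : C.IsPrincipalDiff P1 P2 k) (hl : C.IsPrincipalDiff P1 P2 l) :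
    C.IsPrincipalDiff P1 P2 (k - l) := by
  obtain ⟨x, hx, hx1, hx2, hxQ⟩ := hk
  obtain ⟨y, hy, hy1, hy2, hyQ⟩ := hl
  refine ⟨x * y⁻¹, mul_ne_zero hx (inv_ne_zero hy), ?_, ?_, ?_⟩
  · rw [C.v_div P1 x y hx hy, hx1, hy1]
  · rw [C.v_div P2 x y hx hy, hx2, hy2]; ring
  · intro Q hQ1 hQ2
    rw [C.v_div Q x y hx hy, hxQ Q hQ1 hQ2, hyQ Q hQ1 hQ2]
    norm_num

lemma princ_zero (P1 P2 : C.Place) : C.IsPrincipalDiff P1 P2 0 :=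
  ⟨1, one_ne_zero, C.v_one P1, by rw [C.v_one]; ring, fun Q _ _ => C.v_one Q⟩

lemma princ_nsmul (P1 P2 : C.Place) (k : ℤ) (hk : C.IsPrincipalDiff P1 P2 k) (n : ℕ) :
    C.IsPrincipalDiff P1 P2 (n * k) := by
  induction n with
  | zero => simpa using C.princ_zero P1 P2
  | succ n ih =>
      have := C.princ_sub P1 P2 (n * k) (-k) ih ?_
      · have h : ((n : ℤ) + 1) * k = n * k - (-k) := by ring
        rw [Nat.cast_succ, h]; exact this
      · have := C.princ_sub P1 P2 0 k (C.princ_zero P1 P2) hk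
        simpa using this

end FnField

/-- The period of `H(P₁, P₂)` for a Kummer extension is `m`. -/
theorem kummer_period (m r : ℕ) (C : KummerData m r) :
    C.toFnField.period C.P1 C.P2 = m := by
  set F := C.toFnField with hF
  set S : Set ℕ := {k : ℕ | 0 < k ∧ F.IsPrincipalDiff C.P1 C.P2 (k : ℤ)} with hS
  have hmS : m ∈ S := ⟨by have := C.hm; omega, C.princ⟩
  have hne : S.Nonempty := ⟨m, hmS⟩
  have hper : F.period C.P1 C.P2 = sInf S := rfl
  obtain ⟨π, hπ⟩ : ∃ π, sInf S = π := ⟨_, rfl⟩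
  rw [hper, hπ]
  have hmem : π ∈ S := hπ ▸ Nat.sInf_mem hne
  have hle : π ≤ m := hπ ▸ Nat.sInf_le hmS
  obtain ⟨hπpos, hπprinc⟩ := hmem
  -- π divides m
  have hdvd : π ∣ m := by
    by_contra hnd
    have hmod : m % π ≠ 0 := fun h => hnd (Nat.dvd_of_mod_eq_zero h)
    have hmodS : m % π ∈ S := by
      refine ⟨Nat.pos_of_ne_zero hmod, ?_⟩
      have hcast : ((m % π : ℕ) : ℤ) = (m : ℤ) - ((m / π : ℕ) : ℤ) * (π : ℤ) := by
        have h2 : (π : ℤ) * ((m : ℤ) / (π : ℤ)) + (m : ℤ) % (π : ℤ) = (m : ℤ) :=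
          Int.mul_ediv_add_emod m π
        push_cast
        linarith
      rw [hcast]
      exact F.princ_sub C.P1 C.P2 _ _ C.princ (F.princ_nsmul C.P1 C.P2 _ hπprinc _)
    have h1 : π ≤ m % π := by
      have h1' := Nat.sInf_le hmodS
      rw [hπ] at h1'
      exact h1'
    have h2 := Nat.mod_lt m hπpos
    omega
  -- π ∈ H(P₂), hence m - ⌊m/r⌋ ≤ π
  have hHone : F.Hone C.P2 π := by
    obtain ⟨x, hx, hx1, hx2, hxQ⟩ := hπprinc
    refine ⟨x, hx, hx2, fun Q hQ => ?_⟩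
    by_cases h1 : Q = C.P1
    · rw [h1, hx1]; positivity
    · rw [hxQ Q h1 hQ]
  have hbound : m - m / r ≤ π := C.H2_min π hπpos hHone
  -- conclude π = m
  by_contra hne'
  have hπlt : π < m := lt_of_le_of_ne hle hne'
  obtain ⟨t, ht⟩ := hdvd
  have hm := C.hm
  have h2π : 2 * π ≤ m := by
    have ht2 : 2 ≤ t := by
      rcases Nat.lt_or_ge t 2 with h | h
      · exfalso; interval_cases t <;> omega
      · exact h
    calc 2 * π ≤ t * π := Nat.mul_le_mul_right π ht2
      _ = π * t := Nat.mul_comm t π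
      _ = m := ht.symm
  have hqr : m / r * r ≤ m := Nat.div_mul_le_self m r
  have hm2q : m ≤ 2 * (m / r) := by omega
  have hq1 : 1 ≤ m / r := by omega
  have hrle : r ≤ 2 := by
    have h : m / r * r ≤ m / r * 2 := by omega
    exact Nat.le_of_mul_le_mul_left h (by omega)
  have hr : r = 2 := by have := C.hr; omega
  subst hr
  -- m is odd since gcd(m, 2λ) = 1
  have h2 : Nat.Coprime m 2 := Nat.Coprime.coprime_dvd_right ⟨C.lam, by ring⟩ C.coprime
  have hmodd : m % 2 = 1 := Nat.odd_iff.mp (Nat.coprime_two_right.mp h2)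
  omega
end

section
/- In the Kummer extension setting, for 0 ≤ k ≤ r−2−⌊r/m⌋, the set Γ_{k,0} equals {(mk+j, j) : max{1, m−⌊m(k+2)/r⌋} ≤ j ≤ m−1−⌊m(k+1)/r⌋}, and its cardinality is ⌈m(k+2)/r⌉ − ⌈m(k+1)/r⌉. -/
section KummerProofHelpers

namespace KGP

lemma v_inv (C : FnField) (P : C.Place) (x : C.F) (hx : x ≠ 0) : C.v P x⁻¹ = - C.v P x := by
  have h := C.v_mul P x x⁻¹ hx (inv_ne_zero hx)
  rw [mul_inv_cancel₀ hx, C.v_one] at h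
  linarith

lemma princ_add (C : FnField) {P1 P2 : C.Place} {a b : ℤ}
    (ha : C.IsPrincipalDiff P1 P2 a) (hb : C.IsPrincipalDiff P1 P2 b) :
    C.IsPrincipalDiff P1 P2 (a + b) := by
  obtain ⟨x, hx0, hx1, hx2, hx3⟩ := ha
  obtain ⟨y, hy0, hy1, hy2, hy3⟩ := hb
  exact ⟨x * y, mul_ne_zero hx0 hy0,
    by rw [C.v_mul _ _ _ hx0 hy0, hx1, hy1],
    by rw [C.v_mul _ _ _ hx0 hy0, hx2, hy2]; ring,
    fun Q h1 h2 => by rw [C.v_mul _ _ _ hx0 hy0, hx3 Q h1 h2, hy3 Q h1 h2]; norm_num⟩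

lemma princ_neg (C : FnField) {P1 P2 : C.Place} {a : ℤ}
    (ha : C.IsPrincipalDiff P1 P2 a) : C.IsPrincipalDiff P1 P2 (-a) := by
  obtain ⟨x, hx0, hx1, hx2, hx3⟩ := ha
  exact ⟨x⁻¹, inv_ne_zero hx0, by rw [v_inv C _ _ hx0, hx1],
    by rw [v_inv C _ _ hx0, hx2],
    fun Q h1 h2 => by rw [v_inv C _ _ hx0, hx3 Q h1 h2, neg_zero]⟩

lemma princ_zero (C : FnField) (P1 P2 : C.Place) : C.IsPrincipalDiff P1 P2 0 :=
  ⟨1, one_ne_zero, by rw [C.v_one], by rw [C.v_one]; ring, fun Q _ _ => C.v_one Q⟩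

lemma princ_nsmul (C : FnField) {P1 P2 : C.Place} {a : ℤ}
    (ha : C.IsPrincipalDiff P1 P2 a) (t : ℕ) : C.IsPrincipalDiff P1 P2 ((t : ℤ) * a) := by
  induction t with
  | zero => simpa using princ_zero C P1 P2
  | succ n ih =>
      have h := princ_add C ih ha
      convert h using 1
      push_cast
      ring

lemma two_mul_div_lt {m r : ℕ} (hm : 2 ≤ m) (hr : 2 ≤ r) (hco : Nat.Coprime m r) :
    2 * (m / r) < m := by
  rcases eq_or_lt_of_le hr with h2 | h3
  · subst h2
    have hodd : m % 2 = 1 := by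
      rcases Nat.even_or_odd m with he | ho
      · exfalso
        have h2d : (2:ℕ) ∣ Nat.gcd m 2 := Nat.dvd_gcd he.two_dvd (dvd_refl 2)
        rw [Nat.Coprime] at hco
        rw [hco] at h2d
        omega
      · exact Nat.odd_iff.mp ho
    omega
  · have h1 : m / r ≤ m / 3 := Nat.div_le_div_left h3 (by norm_num)
    omega

lemma floor_le_sub_two {m r j : ℕ} (hm : 2 ≤ m) (hr : 2 ≤ r)
    (hj : j ≤ m - 1 - m / r) : r * j / m ≤ r - 2 := by
  have hz3 := Nat.zero_le (m / r)
  have hz4 := Nat.zero_le (r * j / m)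
  have hm0 : 0 < m := by omega
  have hdr : m / r ≤ m / 2 := Nat.div_le_div_left hr (by norm_num)
  have hdle : m / r ≤ m - 1 := by omega
  have e1 : m / r + (m - 1 - m / r) = m - 1 := by omega
  have e2 : r * (m / r) + r * (m - 1 - m / r) = r * (m - 1) := by
    rw [← Nat.mul_add, e1]
  have e3 := Nat.div_add_mod m r
  have e4 : m % r < r := Nat.mod_lt m (by omega)
  have e5 : r * (m - 1) + r = r * m := by
    rw [← Nat.mul_succ]; congr 1; omega
  have e6 : m * (r - 1) + m = m * r := by
    rw [← Nat.mul_succ]; congr 1; omega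
  have hj2 := Nat.mul_le_mul (Nat.le_refl r) hj
  have hcm : m * r = r * m := Nat.mul_comm m r
  have hlt : r * j < (r - 1) * m := by
    have hcm2 : (r - 1) * m = m * (r - 1) := Nat.mul_comm _ m
    omega
  have := (Nat.div_lt_iff_lt_mul hm0).mpr hlt
  omega

/-- Direction A: from the floor equation to the j-range. -/
lemma dirA {m r k j : ℕ} (hm : 0 < m) (hr : 0 < r) (hk2 : k + 2 ≤ r)
    (hj1 : 1 ≤ j) (hjm : j ≤ m - 1) (hfl : r * j / m = r - 2 - k) :
    m - m * (k + 2) / r ≤ j ∧ j ≤ m - 1 - m * (k + 1) / r := by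
  have hz1 := Nat.zero_le (m * (k + 1) / r)
  have hz2 := Nat.zero_le (m * (k + 2) / r)
  have hs : r - 2 - k = r - (k + 2) := by omega
  rw [hs] at hfl
  have h1 : m * (r - (k + 2)) ≤ r * j := by
    have h := Nat.div_mul_le_self (r * j) m
    rw [hfl] at h
    have : (r - (k+2)) * m = m * (r - (k+2)) := Nat.mul_comm _ _
    omega
  have h2 : r * j < m * (r - (k + 2)) + m := by
    have hd := Nat.div_add_mod (r * j) m
    have hmod := Nat.mod_lt (r * j) hm
    rw [hfl] at hd
    omega
  have F2 : m * (r - (k + 2)) + m * (k + 2) = m * r := by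
    rw [← Nat.mul_add]; congr 1; omega
  have F5 : m * (r - (k + 2)) + m = m * (r - (k + 1)) := by
    rw [← Nat.mul_succ]; congr 1; omega
  have F2' : m * (r - (k + 1)) + m * (k + 1) = m * r := by
    rw [← Nat.mul_add]; congr 1; omega
  have e : (m - j) * r + j * r = m * r := by
    rw [← Nat.add_mul]; congr 1; omega
  have hc : j * r = r * j := Nat.mul_comm _ _
  constructor
  · have g : m - j ≤ m * (k + 2) / r := by
      rw [Nat.le_div_iff_mul_le hr]
      omega
    omega
  · have g : m * (k + 1) / r < (m - 1 - j) + 1 := by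
      rw [Nat.div_lt_iff_lt_mul hr]
      have e2 : m - 1 - j + 1 = m - j := by omega
      rw [e2]
      omega
    omega

/-- Direction B: from the j-range to the floor equation (and j ≤ m-1-m/r). -/
lemma dirB {m r k j : ℕ} (hm : 0 < m) (hr : 0 < r) (hk2 : k + 2 ≤ r)
    (hj1 : 1 ≤ j) (hlo : m - m * (k + 2) / r ≤ j) (hhi : j ≤ m - 1 - m * (k + 1) / r) :
    r * j / m = r - 2 - k ∧ j ≤ m - 1 - m / r := by
  have hz1 := Nat.zero_le (m * (k + 1) / r)
  have hz2 := Nat.zero_le (m * (k + 2) / r)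
  have hz3 := Nat.zero_le (m / r)
  have hz4 := Nat.zero_le (r * j / m)
  have hAdm := Nat.div_add_mod (m * (k + 1)) r
  have hAmod := Nat.mod_lt (m * (k + 1)) hr
  have hjm1 : j ≤ m - 1 := by omega
  have hAdr : m * (k + 1) / r ≤ m - 1 := by omega
  have F2 : m * (r - (k + 2)) + m * (k + 2) = m * r := by
    rw [← Nat.mul_add]; congr 1; omega
  have F5 : m * (r - (k + 2)) + m = m * (r - (k + 1)) := by
    rw [← Nat.mul_succ]; congr 1; omega
  have F2' : m * (r - (k + 1)) + m * (k + 1) = m * r := by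
    rw [← Nat.mul_add]; congr 1; omega
  have hc : j * r = r * j := Nat.mul_comm _ _
  have hcm : m * r = r * m := Nat.mul_comm _ _
  have hup : r * j < m * (r - (k + 1)) := by
    have hmul := Nat.mul_le_mul (Nat.le_refl r) hhi
    have e1 : m * (k + 1) / r + (m - 1 - m * (k + 1) / r) = m - 1 := by omega
    have e2 : r * (m * (k + 1) / r) + r * (m - 1 - m * (k + 1) / r) = r * (m - 1) := by
      rw [← Nat.mul_add, e1]
    have e3 : r * (m - 1) + r = r * m := by
      rw [← Nat.mul_succ]; congr 1; omega
    omega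
  have hlow : m * (r - (k + 2)) ≤ r * j := by
    have g : m - j ≤ m * (k + 2) / r := by omega
    have h1 := Nat.mul_le_mul g (Nat.le_refl r)
    have h2 := Nat.div_mul_le_self (m * (k + 2)) r
    have e : (m - j) * r + j * r = m * r := by
      rw [← Nat.add_mul]; congr 1; omega
    omega
  have d1 : r - (k + 2) ≤ r * j / m := by
    rw [Nat.le_div_iff_mul_le hm]
    have : (r - (k + 2)) * m = m * (r - (k + 2)) := Nat.mul_comm _ _
    omega
  have d2 : r * j / m < (r - (k + 2)) + 1 := by
    rw [Nat.div_lt_iff_lt_mul hm]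
    have : (r - (k + 2) + 1) * m = m * (r - (k + 1)) := by
      rw [Nat.mul_comm]; rw [← F5]; rw [Nat.mul_succ]
    omega
  constructor
  · omega
  · have hmono : m / r ≤ m * (k + 1) / r := by
      apply Nat.div_le_div_right
      have : m * 1 ≤ m * (k + 1) := Nat.mul_le_mul (Nat.le_refl m) (by omega)
      omega
    omega

lemma ceilDiv_of_not_dvd {a r : ℕ} (hr : 0 < r) (h : ¬ r ∣ a) : a ⌈/⌉ r = a / r + 1 := by
  rw [Nat.ceilDiv_eq_add_pred_div]
  have hd := Nat.div_add_mod a r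
  have hmod := Nat.mod_lt a hr
  have h0 : a % r ≠ 0 := fun h0 => h (Nat.dvd_of_mod_eq_zero h0)
  have e : a + r - 1 = r * (a / r + 1) + (a % r - 1) := by
    rw [Nat.mul_add, Nat.mul_one]
    omega
  rw [e, Nat.mul_add_div hr, Nat.div_eq_of_lt (show a % r - 1 < r by omega)]

lemma ceilDiv_of_dvd {a r : ℕ} (hr : 0 < r) (h : r ∣ a) : a ⌈/⌉ r = a / r := by
  rw [Nat.ceilDiv_eq_add_pred_div]
  obtain ⟨c, rfl⟩ := h
  have e : r * c + r - 1 = r * c + (r - 1) := by omega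
  rw [e, Nat.mul_add_div hr, Nat.div_eq_of_lt (show r - 1 < r by omega),
    Nat.mul_div_cancel_left _ hr]
  omega

lemma card_arith {m r k : ℕ} (hm : 2 ≤ m) (hr : 2 ≤ r) (hco : Nat.Coprime m r)
    (hk1 : k + 1 < r) (hk2 : k + 2 ≤ r) :
    (m - 1 - m * (k + 1) / r) + 1 - max 1 (m - m * (k + 2) / r) =
      m * (k + 2) ⌈/⌉ r - m * (k + 1) ⌈/⌉ r := by
  have hz1 := Nat.zero_le (m * (k + 1) / r)
  have hz2 := Nat.zero_le (m * (k + 2) / r)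
  have hr0 : 0 < r := by omega
  have hm0 : 0 < m := by omega
  have hndA : ¬ r ∣ m * (k + 1) := by
    intro hd
    have : r ∣ k + 1 := (Nat.Coprime.symm hco).dvd_of_dvd_mul_left hd
    have := Nat.le_of_dvd (by omega) this
    omega
  have hA := ceilDiv_of_not_dvd hr0 hndA
  have hAlt : m * (k + 1) / r ≤ m - 1 := by
    have h := (Nat.div_lt_iff_lt_mul hr0).mpr (show m * (k + 1) < m * r from
      mul_lt_mul_of_pos_left (show k + 1 < r by omega) hm0)
    omega
  rcases eq_or_lt_of_le hk2 with he | hlt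
  · have hB : m * (k + 2) = r * m := by rw [← he]; ring
    have hBc : m * (k + 2) ⌈/⌉ r = m := by
      rw [ceilDiv_of_dvd hr0 ⟨m, hB⟩, hB, Nat.mul_div_cancel_left _ hr0]
    have hBd : m * (k + 2) / r = m := by rw [hB, Nat.mul_div_cancel_left _ hr0]
    rw [hBc, hA, hBd]
    omega
  · have hndB : ¬ r ∣ m * (k + 2) := by
      intro hd
      have : r ∣ k + 2 := (Nat.Coprime.symm hco).dvd_of_dvd_mul_left hd
      have := Nat.le_of_dvd (by omega) this
      omega
    have hB := ceilDiv_of_not_dvd hr0 hndB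
    have hBlt : m * (k + 2) / r ≤ m - 1 := by
      have h := (Nat.div_lt_iff_lt_mul hr0).mpr (show m * (k + 2) < m * r from
        mul_lt_mul_of_pos_left (show k + 2 < r by omega) hm0)
      omega
    have hmono : m * (k + 1) / r ≤ m * (k + 2) / r := by
      apply Nat.div_le_div_right
      exact Nat.mul_le_mul (Nat.le_refl m) (by omega)
    rw [hA, hB]
    have hmax : max 1 (m - m * (k + 2) / r) = m - m * (k + 2) / r := by omega
    rw [hmax]
    omega

lemma period_eq {m r : ℕ} (C : KummerData m r) :
    C.toFnField.period C.P1 C.P2 = m := by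
  unfold FnField.period
  set S : Set ℕ := {k : ℕ | 0 < k ∧ C.toFnField.IsPrincipalDiff C.P1 C.P2 (k : ℤ)} with hS
  have hm0 : 0 < m := by have := C.hm; omega
  have hmem : m ∈ S := ⟨hm0, C.princ⟩
  have hne : S.Nonempty := ⟨m, hmem⟩
  obtain ⟨hp0, hpP⟩ : sInf S ∈ S := Nat.sInf_mem hne
  set p := sInf S with hpdef
  have hle : p ≤ m := Nat.sInf_le hmem
  have hmodP : C.toFnField.IsPrincipalDiff C.P1 C.P2 ((m % p : ℕ) : ℤ) := by
    have h1 := princ_nsmul C.toFnField hpP (m / p)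
    have h2 := princ_add C.toFnField C.princ (princ_neg C.toFnField h1)
    convert h2 using 1
    have hd : p * (m / p) + m % p = m := Nat.div_add_mod m p
    have hc : ((m / p : ℕ) : ℤ) * (p : ℤ) = (p : ℤ) * ((m / p : ℕ) : ℤ) := mul_comm _ _
    omega
  have hmod0 : m % p = 0 := by
    by_contra h
    have hmemS : m % p ∈ S := ⟨Nat.pos_of_ne_zero h, hmodP⟩
    have hle2 := Nat.sInf_le hmemS
    have := Nat.mod_lt m hp0
    omega
  have hdvd : p ∣ m := Nat.dvd_of_mod_eq_zero hmod0
  have hHone : C.toFnField.Hone C.P2 p := by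
    obtain ⟨x, hx0, hx1, hx2, hx3⟩ := hpP
    refine ⟨x, hx0, by rw [hx2], fun Q hQ => ?_⟩
    by_cases hQ1 : Q = C.P1
    · subst hQ1; rw [hx1]; positivity
    · rw [hx3 Q hQ1 hQ]
  have hH2 := C.H2_min p hp0 hHone
  have hco : Nat.Coprime m r :=
    Nat.Coprime.coprime_dvd_right (dvd_mul_left r C.lam) C.coprime
  have h2d := two_mul_div_lt C.hm C.hr hco
  have hzr := Nat.zero_le (m / r)
  obtain ⟨c, hc⟩ := hdvd
  rcases Nat.lt_or_ge c 2 with hc2 | hc2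
  · interval_cases c <;> omega
  · exfalso
    have h2p : p * 2 ≤ p * c := Nat.mul_le_mul (Nat.le_refl p) hc2
    omega

end KGP

end KummerProofHelpers

/-- For `0 ≤ k ≤ r - 2 - ⌊r/m⌋`,
`Γ_{k,0} = {(mk + j, j) : max{1, m - ⌊m(k+2)/r⌋} ≤ j ≤ m - 1 - ⌊m(k+1)/r⌋}` and
`|Γ_{k,0}| = ⌈m(k+2)/r⌉ - ⌈m(k+1)/r⌉`. -/
theorem kummer_gammaPart (m r : ℕ) (C : KummerData m r) (k : ℕ)
    (hk : k ≤ r - 2 - r / m) :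
    C.toFnField.GammaPart C.P1 C.P2 k 0 =
      {p : ℕ × ℕ | ∃ j : ℕ, max 1 (m - m * (k + 2) / r) ≤ j ∧
        j ≤ m - 1 - m * (k + 1) / r ∧ p = (m * k + j, j)} ∧
    (C.toFnField.GammaPart C.P1 C.P2 k 0).ncard =
      (m * (k + 2)) ⌈/⌉ r - (m * (k + 1)) ⌈/⌉ r := by
  classical
  have hm2 := C.hm
  have hr2 := C.hr
  have hm0 : 0 < m := by omega
  have hr0 : 0 < r := by omega
  have hco : Nat.Coprime m r :=
    Nat.Coprime.coprime_dvd_right (dvd_mul_left r C.lam) C.coprime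
  have hmner : m ≠ r := by
    intro h
    subst h
    rw [Nat.Coprime, Nat.gcd_self] at hco
    omega
  have hk12 : k + 1 < r ∧ k + 2 ≤ r := by
    have hzrm := Nat.zero_le (r / m)
    rcases Nat.lt_trichotomy m r with h | h | h
    · have h1 : 1 ≤ r / m := (Nat.one_le_div_iff hm0).mpr (le_of_lt h)
      omega
    · exact absurd h hmner
    · have h1 : r / m = 0 := Nat.div_eq_of_lt h
      omega
  obtain ⟨hk1, hk2⟩ := hk12
  have hp := KGP.period_eq C
  have hcm1 : k * m = m * k := Nat.mul_comm _ _
  have hcm2 : (k + 1) * m = m * (k + 1) := Nat.mul_comm _ _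
  have hmk1 : m * (k + 1) = m * k + m := by rw [Nat.mul_succ]
  have hzd1 := Nat.zero_le (m * (k + 1) / r)
  have hzd2 := Nat.zero_le (m * (k + 2) / r)
  have hzd3 := Nat.zero_le (m / r)
  have hzd4 := Nat.zero_le (r / m)
  have hsetEq : C.toFnField.GammaPart C.P1 C.P2 k 0 =
      {p : ℕ × ℕ | ∃ j : ℕ, max 1 (m - m * (k + 2) / r) ≤ j ∧
        j ≤ m - 1 - m * (k + 1) / r ∧ p = (m * k + j, j)} := by
    ext q
    simp only [FnField.GammaPart, Set.mem_setOf_eq, hp, C.gamma_desc]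
    constructor
    · rintro ⟨hmem, hI1, hI2, hI3, hI4⟩
      obtain ⟨j, k1, k2, hj1, hj2, hsum, hpp⟩ := hmem
      rw [hpp] at hI1 hI2 hI3 hI4 ⊢
      simp only at hI1 hI2 hI3 hI4
      have hjm : j ≤ m - 1 := by omega
      have hk2z : k2 = 0 := by
        have h : m * k2 < m * 1 := by omega
        exact Nat.lt_one_iff.mp (lt_of_mul_lt_mul_left h (Nat.zero_le m))
      have hk1k : k1 = k := by
        have h1 : m * k1 < m * (k + 1) := by omega
        have h2 : m * k < m * (k1 + 1) := by
          have e : m * (k1 + 1) = m * k1 + m := by rw [Nat.mul_succ]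
          omega
        have g1 := lt_of_mul_lt_mul_left h1 (Nat.zero_le m)
        have g2 := lt_of_mul_lt_mul_left h2 (Nat.zero_le m)
        omega
      have hfle := KGP.floor_le_sub_two C.hm C.hr hj2
      have hzf := Nat.zero_le (r * j / m)
      have hfl : r * j / m = r - 2 - k := by omega
      obtain ⟨g1, g2⟩ := KGP.dirA hm0 hr0 hk2 hj1 hjm hfl
      exact ⟨j, max_le hj1 g1, g2, by rw [hk1k, hk2z]; norm_num⟩
    · rintro ⟨j, hlo, hhi, hpp⟩
      have hj1 : 1 ≤ j := le_trans (le_max_left _ _) hlo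
      have hlo' : m - m * (k + 2) / r ≤ j := le_trans (le_max_right _ _) hlo
      obtain ⟨hfl, hjm2⟩ := KGP.dirB hm0 hr0 hk2 hj1 hlo' hhi
      have hzf := Nat.zero_le (r * j / m)
      have hjm : j ≤ m - 1 := by omega
      refine ⟨⟨j, k, 0, hj1, hjm2, by omega, by rw [hpp]; norm_num⟩, ?_, ?_, ?_, ?_⟩ <;>
        rw [hpp] <;> simp only <;> omega
  refine ⟨hsetEq, ?_⟩
  rw [hsetEq]
  have himg : {p : ℕ × ℕ | ∃ j : ℕ, max 1 (m - m * (k + 2) / r) ≤ j ∧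
        j ≤ m - 1 - m * (k + 1) / r ∧ p = (m * k + j, j)} =
      (fun j => (m * k + j, j)) ''
        Set.Icc (max 1 (m - m * (k + 2) / r)) (m - 1 - m * (k + 1) / r) := by
    ext q
    simp only [Set.mem_setOf_eq, Set.mem_image, Set.mem_Icc]
    constructor
    · rintro ⟨j, h1, h2, h3⟩; exact ⟨j, ⟨h1, h2⟩, h3.symm⟩
    · rintro ⟨j, ⟨h1, h2⟩, h3⟩; exact ⟨j, h1, h2, h3.symm⟩
  rw [himg, Set.ncard_image_of_injective _
    (fun x y h => by simpa using (Prod.ext_iff.mp h).2)]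
  have hIccEq : Set.Icc (max 1 (m - m * (k + 2) / r)) (m - 1 - m * (k + 1) / r) =
      ↑(Finset.Icc (max 1 (m - m * (k + 2) / r)) (m - 1 - m * (k + 1) / r)) :=
    (Finset.coe_Icc _ _).symm
  rw [hIccEq, Set.ncard_coe_finset, Nat.card_Icc]
  exact KGP.card_arith C.hm C.hr hco hk1 hk2
end

section
/- Let r ≥ 2 and u ≥ 1 be integers and set m = ur+1. Then ∑_{k=1}^{r−2} k·[(m − ⌈mk/r⌉)² − (⌈m(k+1)/r⌉ − ⌈mk/r⌉)²] = u²·r(r+3)(r−1)(r−2)/12. -/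
lemma ceil_aux (r u k : ℕ) (hr : 1 ≤ r) (hk1 : 1 ≤ k) (hk : k ≤ r) :
    ((u * r + 1) * k) ⌈/⌉ r = u * k + 1 := by
  rw [Nat.ceilDiv_eq_add_pred_div]
  have h1 : (u * r + 1) * k + r - 1 = r * (u * k + 1) + (k - 1) := by ring_nf; omega
  rw [h1, Nat.mul_add_div (by omega), Nat.div_eq_of_lt (by omega)]

lemma key_sum (R : ℚ) : ∀ n : ℕ, ∑ k ∈ Finset.Icc 1 n, (k : ℚ) * ((R - k) ^ 2 - 1)
    = R ^ 2 * (n * (n + 1) / 2) - 2 * R * (n * (n + 1) * (2 * n + 1) / 6)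
      + (n * (n + 1) / 2) ^ 2 - n * (n + 1) / 2 := by
  intro n
  induction n with
  | zero => simp
  | succ n ih =>
      rw [Finset.sum_Icc_succ_top (by omega), ih]
      push_cast
      ring

/-- For `r ≥ 2`, `u ≥ 1` and `m = ur + 1`,
`∑_{k=1}^{r-2} k [(m - ⌈mk/r⌉)² - (⌈m(k+1)/r⌉ - ⌈mk/r⌉)²] = u² r(r+3)(r-1)(r-2)/12`. -/
theorem kummer_card_m_eq_ur_add_one (r u : ℕ) (hr : 2 ≤ r) (hu : 1 ≤ u) :
    (∑ k ∈ Finset.Icc 1 (r - 2), (k : ℚ) *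
        ((((u * r + 1 : ℕ) : ℚ) - (((u * r + 1) * k) ⌈/⌉ r : ℕ)) ^ 2 -
          ((((u * r + 1) * (k + 1)) ⌈/⌉ r : ℕ) - ((((u * r + 1) * k) ⌈/⌉ r : ℕ) : ℚ)) ^ 2)) =
      (u : ℚ) ^ 2 * (r : ℚ) * ((r : ℚ) + 3) * ((r : ℚ) - 1) * ((r : ℚ) - 2) / 12 := by
  have hcongr : ∀ k ∈ Finset.Icc 1 (r - 2), (k : ℚ) *
        ((((u * r + 1 : ℕ) : ℚ) - (((u * r + 1) * k) ⌈/⌉ r : ℕ)) ^ 2 -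
          ((((u * r + 1) * (k + 1)) ⌈/⌉ r : ℕ) - ((((u * r + 1) * k) ⌈/⌉ r : ℕ) : ℚ)) ^ 2)
      = (u : ℚ) ^ 2 * ((k : ℚ) * (((r : ℚ) - k) ^ 2 - 1)) := by
    intro k hk
    simp only [Finset.mem_Icc] at hk
    rw [ceil_aux r u k (by omega) hk.1 (by omega),
      ceil_aux r u (k + 1) (by omega) (by omega) (by omega)]
    push_cast
    ring
  rw [Finset.sum_congr rfl hcongr, ← Finset.mul_sum, key_sum]
  have h2 : ((r - 2 : ℕ) : ℚ) = (r : ℚ) - 2 := by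
    have : ((r - 2 : ℕ) : ℚ) = ((r : ℕ) : ℚ) - ((2 : ℕ) : ℚ) := by
      rw [Nat.cast_sub hr]
    simpa using this
  rw [h2]
  ring
end

section
/- Let N ≥ 1 divide q+1 with q−2−N ≥ 0, set m = (q+1)/N and r = q. Then ∑_{k=1}^{q−1−N} k·[(m − ⌈mk/q⌉)² − (⌈m(k+1)/q⌉ − ⌈mk/q⌉)²] = (q+1)(m−1)((q+1)(m−1) − 2m + N + 7)/12 − q(m−1). -/
private lemma kummer_gauss_q (s : ℕ) :
    (∑ j ∈ Finset.range s, (j : ℚ)) = s * (s - 1) / 2 := by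
  induction s with
  | zero => simp
  | succ n ih => rw [Finset.sum_range_succ, ih]; push_cast; ring

/-- key ceiling computation -/
private lemma kummer_ceil_eq (q N m k : ℕ) (hN : 1 ≤ N) (hm : q + 1 = N * m)
    (hk1 : 1 ≤ k) (hk2 : k ≤ q - 1) : (m * k) ⌈/⌉ q = k / N + 1 := by
  have hq : 2 ≤ q := by omega
  rw [Nat.ceilDiv_eq_add_pred_div]
  have hkey : N * (k / N) + k % N = k := Nat.div_add_mod k N
  have hjN : k % N < N := Nat.mod_lt _ (by omega)
  generalize hℓd : k / N = ℓ at *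
  generalize hjd : k % N = j at *
  have hmk : m * k = q * ℓ + ℓ + m * j := by
    have h' : m * k = N * m * ℓ + m * j := by rw [← hkey]; ring
    rw [← hm] at h'
    rw [h']; ring
  have hℓm : ℓ < m := by
    have h1 : N * ℓ < N * m := by omega
    exact Nat.lt_of_mul_lt_mul_left h1
  have hmj : m * j + m ≤ N * m := by
    have h' : m * (j + 1) ≤ m * N := Nat.mul_le_mul_left m (by omega)
    rw [Nat.mul_add, Nat.mul_one, Nat.mul_comm m N] at h'
    exact h'
  have hm1 : 1 ≤ m := by
    rcases Nat.eq_zero_or_pos m with h | h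
    · subst h; omega
    · exact h
  have h1 : 1 ≤ ℓ + m * j := by
    rcases Nat.eq_zero_or_pos j with hj0 | hj0
    · rcases Nat.eq_zero_or_pos ℓ with hℓ0 | hℓ0
      · rw [hℓ0, Nat.mul_zero, Nat.zero_add] at hkey; omega
      · omega
    · have : m * 1 ≤ m * j := Nat.mul_le_mul_left m hj0
      omega
  have h2 : ℓ + m * j ≤ q := by omega
  apply Nat.div_eq_of_lt_le
  · rw [show (ℓ + 1) * q = q * ℓ + q from by ring]
    omega
  · rw [show (ℓ + 1 + 1) * q = q * ℓ + 2 * q from by ring]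
    omega

private def kummer_g (N : ℕ) (c : ℚ) (k : ℕ) : ℚ :=
  (k : ℚ) * ((c - (k / N : ℕ)) ^ 2 - (((k + 1) / N : ℕ) - ((k / N : ℕ) : ℚ)) ^ 2)

private lemma kummer_inner_sum (N : ℕ) (hN : 1 ≤ N) (c : ℚ) (t : ℕ) :
    (∑ j ∈ Finset.range N, kummer_g N c (N * t + j)) =
      ((N : ℚ) ^ 2 * t + N * (N - 1) / 2) * (c - t) ^ 2 - (N * t + N - 1) := by
  obtain ⟨s, rfl⟩ : ∃ s, N = s + 1 := ⟨N - 1, by omega⟩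
  have hNpos : 0 < s + 1 := by omega
  rw [Finset.sum_range_succ]
  have hmain : ∀ j ∈ Finset.range s, kummer_g (s + 1) c ((s + 1) * t + j)
      = (((s : ℚ) + 1) * t + j) * (c - t) ^ 2 := by
    intro j hj
    have hjs : j < s := Finset.mem_range.mp hj
    unfold kummer_g
    have h1 : ((s + 1) * t + j) / (s + 1) = t := by
      rw [Nat.mul_add_div hNpos, Nat.div_eq_of_lt (by omega), Nat.add_zero]
    have h2 : ((s + 1) * t + j + 1) / (s + 1) = t := by
      rw [Nat.add_assoc, Nat.mul_add_div hNpos, Nat.div_eq_of_lt (by omega), Nat.add_zero]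
    rw [h1, h2]
    push_cast
    ring
  rw [Finset.sum_congr rfl hmain]
  have hlast : kummer_g (s + 1) c ((s + 1) * t + s)
      = (((s : ℚ) + 1) * t + s) * ((c - t) ^ 2 - 1) := by
    unfold kummer_g
    have h1 : ((s + 1) * t + s) / (s + 1) = t := by
      rw [Nat.mul_add_div hNpos, Nat.div_eq_of_lt (by omega), Nat.add_zero]
    have h2 : ((s + 1) * t + s + 1) / (s + 1) = t + 1 := by
      have h : (s + 1) * t + s + 1 = (s + 1) * (t + 1) := by ring
      rw [h, Nat.mul_div_cancel_left _ hNpos]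
    rw [h1, h2]
    push_cast
    ring
  rw [hlast, ← Finset.sum_mul, Finset.sum_add_distrib, Finset.sum_const, kummer_gauss_q]
  simp only [Finset.card_range, nsmul_eq_mul]
  push_cast
  ring

private def kummer_Fc (N : ℕ) (c : ℚ) (t : ℚ) : ℚ :=
  (N : ℚ) ^ 2 * (c ^ 2 * (t * (t - 1) / 2) - 2 * c * (t * (t - 1) * (2 * t - 1) / 6)
      + t ^ 2 * (t - 1) ^ 2 / 4)
    + (N : ℚ) * (N - 1) / 2 * (c ^ 2 * t - 2 * c * (t * (t - 1) / 2)
        + t * (t - 1) * (2 * t - 1) / 6)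
    - (N : ℚ) * (t * (t - 1) / 2) - ((N : ℚ) - 1) * t

private lemma kummer_block_sum (N : ℕ) (hN : 1 ≤ N) (c : ℚ) (t : ℕ) :
    (∑ k ∈ Finset.range (N * t), kummer_g N c k) = kummer_Fc N c t := by
  induction t with
  | zero => simp [kummer_Fc]
  | succ n ih =>
    have h : N * (n + 1) = N * n + N := by ring
    rw [h, Finset.sum_range_add, ih, kummer_inner_sum N hN c n]
    simp only [kummer_Fc]
    push_cast
    ring

/-- Let `N ≥ 1` divide `q + 1` with `q - 2 - N ≥ 0`, and set
`m = (q+1)/N` and `r = q`. Then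
`∑_{k=1}^{q-1-N} k [(m - ⌈mk/q⌉)² - (⌈m(k+1)/q⌉ - ⌈mk/q⌉)²]
  = (q+1)(m-1)((q+1)(m-1) - 2m + N + 7)/12 - q(m-1)`. -/
theorem kummer_card_m_eq_q_add_one_div_N (q N : ℕ) (hN : 1 ≤ N) (hdvd : N ∣ q + 1)
    (hq : N + 2 ≤ q) :
    (∑ k ∈ Finset.Icc 1 (q - 1 - N), (k : ℚ) *
        (((((q + 1) / N : ℕ) : ℚ) - ((((q + 1) / N) * k) ⌈/⌉ q : ℕ)) ^ 2 -
          (((((q + 1) / N) * (k + 1)) ⌈/⌉ q : ℕ) -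
            (((((q + 1) / N) * k) ⌈/⌉ q : ℕ) : ℚ)) ^ 2)) =
      ((q : ℚ) + 1) * ((((q + 1) / N : ℕ) : ℚ) - 1) *
          (((q : ℚ) + 1) * ((((q + 1) / N : ℕ) : ℚ) - 1)
            - 2 * (((q + 1) / N : ℕ) : ℚ) + (N : ℚ) + 7) / 12
        - (q : ℚ) * ((((q + 1) / N : ℕ) : ℚ) - 1) := by
  obtain ⟨m, hm⟩ := hdvd
  have hmq : (q + 1) / N = m := by rw [hm, Nat.mul_div_cancel_left _ (by omega)]
  have hNm1 : N * (m - 1) = N * m - N := by rw [Nat.mul_sub, Nat.mul_one]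
  have hm2 : 2 ≤ m := by
    have : m ≠ 0 ∧ m ≠ 1 := by constructor <;> rintro rfl <;> omega
    omega
  have hNm : 3 ≤ N * (m - 1) := by omega
  rw [hmq]
  set c : ℚ := (m : ℚ) - 1 with hc
  have hqc : (q : ℚ) = (N : ℚ) * m - 1 := by
    have := congrArg (Nat.cast : ℕ → ℚ) hm
    push_cast at this
    linarith
  have key : ∀ k ∈ Finset.Icc 1 (q - 1 - N), (k : ℚ) *
        ((((m : ℕ) : ℚ) - ((m * k) ⌈/⌉ q : ℕ)) ^ 2 -
          ((((m * (k + 1)) ⌈/⌉ q : ℕ) : ℚ) - (((m * k) ⌈/⌉ q : ℕ) : ℚ)) ^ 2)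
      = kummer_g N c k := by
    intro k hk
    obtain ⟨hk1, hk2⟩ := Finset.mem_Icc.mp hk
    have h1 := kummer_ceil_eq q N m k hN hm hk1 (by omega)
    have h2 := kummer_ceil_eq q N m (k + 1) hN hm (by omega) (by omega)
    rw [h1, h2]
    unfold kummer_g
    rw [hc]
    push_cast
    ring
  rw [Finset.sum_congr rfl key]
  have hsub : (∑ k ∈ Finset.Icc 1 (q - 1 - N), kummer_g N c k)
      = ∑ k ∈ Finset.range (N * (m - 1)), kummer_g N c k := by
    apply Finset.sum_subset
    · intro x hx
      rw [Finset.mem_Icc] at hx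
      rw [Finset.mem_range]
      omega
    · intro x hx hnx
      rw [Finset.mem_range] at hx
      rw [Finset.mem_Icc] at hnx
      have hcase : x = 0 ∨ x = N * (m - 1) - 1 := by omega
      rcases hcase with rfl | rfl
      · unfold kummer_g; simp
      · unfold kummer_g
        have hx1 : N * (m - 1) - 1 = N * (m - 2) + (N - 1) := by
          have hb : N * (m - 2) = N * m - N * 2 := by rw [Nat.mul_sub]
          have h2N : N * 2 ≤ N * m := Nat.mul_le_mul_left N hm2
          omega
        have hd1 : (N * (m - 1) - 1) / N = m - 2 := by
          rw [hx1, Nat.mul_add_div (by omega), Nat.div_eq_of_lt (by omega), Nat.add_zero]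
        have hd2 : (N * (m - 1) - 1 + 1) / N = m - 1 := by
          have h : N * (m - 1) - 1 + 1 = N * (m - 1) := by omega
          rw [h, Nat.mul_div_cancel_left _ (by omega)]
        rw [hd1, hd2]
        have e1 : ((m - 2 : ℕ) : ℚ) = (m : ℚ) - 2 := by
          rw [Nat.cast_sub (by omega)]; norm_num
        have e2 : ((m - 1 : ℕ) : ℚ) = (m : ℚ) - 1 := by
          rw [Nat.cast_sub (by omega)]; norm_num
        rw [e1, e2, hc]
        ring
  rw [hsub, kummer_block_sum N hN c (m - 1)]
  have e2 : ((m - 1 : ℕ) : ℚ) = (m : ℚ) - 1 := by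
    rw [Nat.cast_sub (by omega)]; norm_num
  rw [e2, hc, hqc]
  simp only [kummer_Fc]
  ring
end
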